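/- Let J ≥ 2 and let H be the block-diagonal (3J−2)×(3J−2) matrix with blocks ‖∂f*‖²_{L²}(D² − (1/J)A²(A²)ᵀ), ‖f*‖²_{L²}(I_{J−1} + (1/(a_1*)²)A Aᵀ), and I_J, where D = diag(a_2*,...,a_J*), A = (a_2*,...,a_J*)ᵀ, A² = ((a_2*)²,...,(a_J*)²)ᵀ, all a_j* ≠ 0, ∑_j (a_j*)² = J, and f* is non-constant with continuous derivative ∂f*, c_0(f*)=0. Then H is symmetric positive definite and its inverse is the block-diagonal matrix with blocks ‖∂f*‖^{−2}(D^{−2} + (1/(a_1*)²)𝟙𝟙ᵀ), ‖f*‖^{−2}(I_{J−1} − (1/J)A Aᵀ), and I_J. -/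

import Mathlib

/-!
With `X = vecMulVec u v` one has `X * X = (v ⬝ᵥ u) • X`, so `1 + b • X` and `1 - c • X` are
mutually inverse as soon as `b - c = b * c * (v ⬝ᵥ u)`; for both non-trivial blocks this scalar
condition is the normalisation `∑ j, a j ^ 2 = n + 1`. The second block is `1` plus a positive
semidefinite matrix, and the first is the inverse of the positive definite
`diagonal (a i.succ ^ 2)⁻¹ + (a 0 ^ 2)⁻¹ • vecMulVec 1 1`. The scalar factors `∫ f' ^ 2` and
`∫ f ^ 2` over a period are positive because a non-constant periodic `C¹` function and its
derivative are continuous, periodic and not identically zero.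
-/

open Matrix Real

namespace Matrix

variable {m : Type*} [Fintype m]

theorem vecMulVec_mul_self {R : Type*} [CommRing R] (u v : m → R) :
    vecMulVec u v * vecMulVec u v = (v ⬝ᵥ u) • vecMulVec u v := by
  rw [vecMulVec_mul_vecMulVec, vecMulVec_smul]

theorem PosDef.add_smul_vecMulVec_self {R : Type*} [CommRing R] [PartialOrder R] [StarRing R]
    [StarOrderedRing R] [TrivialStar R] {D : Matrix m m R} (hD : D.PosDef) (u : m → R) {b : R}
    (hb : 0 ≤ b) : (D + b • vecMulVec u u).PosDef := by
  refine hD.add_posSemidef (PosSemidef.smul ?_ hb)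
  simpa using posSemidef_vecMulVec_self_star u

variable [DecidableEq m]

open scoped ComplexOrder in
theorem PosDef.fromBlocks_zero {n 𝕜 : Type*} [Fintype n] [DecidableEq n] [RCLike 𝕜]
    {A : Matrix m m 𝕜} {D : Matrix n n 𝕜} (hA : A.PosDef) (hD : D.PosDef) :
    (fromBlocks A 0 0 D).PosDef := by
  let := hA.isUnit.invertible
  have hpsd : (fromBlocks A 0 0 D).PosSemidef := by
    simpa using (PosDef.fromBlocks₁₁ (0 : Matrix m n 𝕜) D hA).2 (by simpa using hD.posSemidef)
  exact hpsd.posDef_iff_isUnit.2 (isUnit_fromBlocks_zero₂₁.2 ⟨hA.isUnit, hD.isUnit⟩)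

section RankOneUpdate

variable {R : Type*} [CommRing R] (u v : m → R) {b c : R} (h : b - c = b * c * (v ⬝ᵥ u))
include h

theorem one_add_smul_vecMulVec_mul_one_sub_smul_vecMulVec :
    (1 + b • vecMulVec u v) * (1 - c • vecMulVec u v) = 1 := by
  simp only [add_mul, mul_sub, one_mul, mul_one, smul_mul_smul_comm, vecMulVec_mul_self]
  linear_combination (norm := module) h • vecMulVec u v

theorem one_sub_smul_vecMulVec_mul_one_add_smul_vecMulVec :
    (1 - c • vecMulVec u v) * (1 + b • vecMulVec u v) = 1 := by
  simp only [sub_mul, mul_add, one_mul, mul_one, smul_mul_smul_comm, vecMulVec_mul_self]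
  linear_combination (norm := module) h • vecMulVec u v

end RankOneUpdate

-- Conjugating by `diagonal v` reduces this to the rank-one update of `1` by `vecMulVec 1 v`.
theorem diagonal_sub_smul_vecMulVec_mul_diagonal_inv_add {K : Type*} [Field K] (v : m → K)
    (hv : ∀ i, v i ≠ 0) {b c : K} (h : b - c = b * c * ∑ i, v i) :
    (diagonal v - c • vecMulVec v v) *
      (diagonal (fun i => (v i)⁻¹) + b • vecMulVec (fun _ => 1) (fun _ => 1)) = 1 := by
  have hleft : diagonal v - c • vecMulVec v v = diagonal v * (1 - c • vecMulVec 1 v) := by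
    rw [mul_sub, mul_one, mul_smul_comm, mul_vecMulVec]
    congr
    ext i
    simp [mulVec_diagonal]
  have hright : diagonal (fun i => (v i)⁻¹) + b • vecMulVec (fun _ => 1) (fun _ => 1)
      = (1 + b • vecMulVec 1 v) * diagonal (fun i => (v i)⁻¹) := by
    rw [add_mul, one_mul, smul_mul_assoc, vecMulVec_mul]
    congr
    ext i
    simp [vecMul_diagonal, hv]
  rw [hleft, hright, mul_assoc, ← mul_assoc (1 - _),
    one_sub_smul_vecMulVec_mul_one_add_smul_vecMulVec 1 v (by rwa [dotProduct_one]), one_mul,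
    diagonal_mul_diagonal]
  simp [hv]

end Matrix

theorem Function.Periodic.periodic_of_hasDerivAt {f f' : ℝ → ℝ} {T : ℝ}
    (hf : Function.Periodic f T) (hderiv : ∀ x, HasDerivAt f (f' x) x) :
    Function.Periodic f' T := fun x =>
  ((hderiv (x + T)).comp_add_const x T).unique
    (by rw [show (fun x => f (x + T)) = f from funext hf]; exact hderiv x)

theorem Function.Periodic.intervalIntegral_sq_pos {g : ℝ → ℝ} {T : ℝ} (hg : Continuous g)
    (hper : Function.Periodic g T) (hT : 0 < T) {t₀ : ℝ} (h : g t₀ ≠ 0) :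
    0 < ∫ t in (0 : ℝ)..T, g t ^ 2 := by
  obtain ⟨t₁, ht₁, hgt₁⟩ := hper.exists_mem_Ico₀ hT t₀
  exact intervalIntegral.integral_pos hT (hg.pow 2).continuousOn (fun _ _ => sq_nonneg _)
    ⟨t₁, Set.Ico_subset_Icc_self ht₁, by rw [← hgt₁]; positivity⟩

theorem exists_ne_zero_of_hasDerivAt {f f' : ℝ → ℝ} (hderiv : ∀ x, HasDerivAt f (f' x) x)
    {s t : ℝ} (hst : f s ≠ f t) : ∃ x, f' x ≠ 0 := by
  by_contra! h
  exact hst (is_const_of_deriv_eq_zero (fun x => (hderiv x).differentiableAt)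
    (fun x => (hderiv x).deriv.trans (h x)) s t)

theorem efficient_information_matrix_general (n : ℕ)
    (a : Fin (n + 1) → ℝ) (ha : ∀ j, a j ≠ 0)
    (hsum : ∑ j, (a j) ^ 2 = ((n + 1 : ℕ) : ℝ))
    (f f' : ℝ → ℝ) (hderiv : ∀ t, HasDerivAt f (f' t) t) (hf' : Continuous f')
    (hper : Function.Periodic f (2 * Real.pi))
    (hnonconst : ∃ s t : ℝ, f s ≠ f t)
    (H Hinv : Matrix (Fin n ⊕ (Fin n ⊕ Fin (n + 1))) (Fin n ⊕ (Fin n ⊕ Fin (n + 1))) ℝ)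
    (hH : H = Matrix.fromBlocks
      ((∫ t in (0 : ℝ)..(2 * Real.pi), (f' t) ^ 2) •
        (Matrix.diagonal (fun i : Fin n => (a i.succ) ^ 2)
          - (((n + 1 : ℕ) : ℝ))⁻¹ •
            Matrix.vecMulVec (fun i => (a i.succ) ^ 2) (fun i => (a i.succ) ^ 2)))
      0 0
      (Matrix.fromBlocks
        ((∫ t in (0 : ℝ)..(2 * Real.pi), (f t) ^ 2) •
          ((1 : Matrix (Fin n) (Fin n) ℝ)
            + ((a 0) ^ 2)⁻¹ • Matrix.vecMulVec (fun i => a i.succ) (fun i => a i.succ)))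
        0 0 (1 : Matrix (Fin (n + 1)) (Fin (n + 1)) ℝ)))
    (hHinv : Hinv = Matrix.fromBlocks
      ((∫ t in (0 : ℝ)..(2 * Real.pi), (f' t) ^ 2)⁻¹ •
        (Matrix.diagonal (fun i : Fin n => ((a i.succ) ^ 2)⁻¹)
          + ((a 0) ^ 2)⁻¹ • Matrix.vecMulVec (fun _ => (1 : ℝ)) (fun _ => (1 : ℝ))))
      0 0
      (Matrix.fromBlocks
        ((∫ t in (0 : ℝ)..(2 * Real.pi), (f t) ^ 2)⁻¹ •
          ((1 : Matrix (Fin n) (Fin n) ℝ)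
            - (((n + 1 : ℕ) : ℝ))⁻¹ • Matrix.vecMulVec (fun i => a i.succ) (fun i => a i.succ)))
        0 0 (1 : Matrix (Fin (n + 1)) (Fin (n + 1)) ℝ))) :
    H.PosDef ∧ Hᵀ = H ∧ H * Hinv = 1 ∧ Hinv * H = 1 := by
  obtain ⟨s, t, hst⟩ := hnonconst
  obtain ⟨t₁, ht₁⟩ := exists_ne_zero_of_hasDerivAt hderiv hst
  obtain ⟨t₂, ht₂⟩ : ∃ t, f t ≠ 0 := not_forall.1 fun h => hst (by rw [h s, h t])
  have hα := (hper.periodic_of_hasDerivAt hderiv).intervalIntegral_sq_pos hf' two_pi_pos ht₁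
  have hβ := hper.intervalIntegral_sq_pos
    (continuous_iff_continuousAt.2 fun t => (hderiv t).continuousAt) two_pi_pos ht₂
  have hb : 0 < (a 0 ^ 2)⁻¹ := by have := ha 0; positivity
  have hv : ∀ i : Fin n, 0 < a i.succ ^ 2 := fun i => by have := ha i.succ; positivity
  have hbc : (a 0 ^ 2)⁻¹ - (((n + 1 : ℕ) : ℝ))⁻¹
      = (a 0 ^ 2)⁻¹ * (((n + 1 : ℕ) : ℝ))⁻¹ * ∑ i : Fin n, a i.succ ^ 2 := by
    rw [Fin.sum_univ_succ] at hsum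
    rw [show ∑ i : Fin n, a i.succ ^ 2 = ((n + 1 : ℕ) : ℝ) - a 0 ^ 2 by linarith]
    have := ha 0
    field_simp
  have hX := diagonal_sub_smul_vecMulVec_mul_diagonal_inv_add _ (fun i => (hv i).ne') hbc
  have hY := one_add_smul_vecMulVec_mul_one_sub_smul_vecMulVec (fun i : Fin n => a i.succ)
    (fun i => a i.succ) (by simp only [dotProduct, ← sq]; exact hbc)
  have hXpos := inv_eq_left_inv hX ▸
    ((PosDef.diagonal fun i => inv_pos.2 (hv i)).add_smul_vecMulVec_self 1 hb.le).inv
  have hYpos := PosDef.one.add_smul_vecMulVec_self (fun i : Fin n => a i.succ) hb.le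
  have hmul : H * Hinv = 1 := by
    rw [hH, hHinv]
    simp only [fromBlocks_multiply, smul_mul_smul_comm, mul_inv_cancel₀ hα.ne',
      mul_inv_cancel₀ hβ.ne', one_smul, hX, hY, Matrix.mul_zero, Matrix.zero_mul, add_zero,
      zero_add, mul_one, fromBlocks_one]
  have hpos : H.PosDef := hH ▸ PosDef.fromBlocks_zero (hXpos.smul hα)
    (PosDef.fromBlocks_zero (hYpos.smul hβ) PosDef.one)
  exact ⟨hpos, (conjTranspose_eq_transpose_of_trivial H).symm.trans hpos.isHermitian, hmul,
    mul_eq_one_comm.1 hmul⟩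

/-- The efficient information matrix `H` of the shape invariant model is
symmetric positive definite, with block-diagonal inverse given by rank-one
update identities. -/
theorem efficient_information_matrix (n : ℕ) (hn : 1 ≤ n)
    (a : Fin (n + 1) → ℝ) (ha : ∀ j, a j ≠ 0)
    (hsum : ∑ j, (a j) ^ 2 = ((n + 1 : ℕ) : ℝ))
    (f f' : ℝ → ℝ) (hderiv : ∀ t, HasDerivAt f (f' t) t) (hf' : Continuous f')
    (hper : Function.Periodic f (2 * Real.pi))
    (hmean : (∫ t in (0 : ℝ)..(2 * Real.pi), f t) = 0)
    (hnonconst : ∃ s t : ℝ, f s ≠ f t)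
    (H Hinv : Matrix (Fin n ⊕ (Fin n ⊕ Fin (n + 1))) (Fin n ⊕ (Fin n ⊕ Fin (n + 1))) ℝ)
    (hH : H = Matrix.fromBlocks
      ((∫ t in (0 : ℝ)..(2 * Real.pi), (f' t) ^ 2) •
        (Matrix.diagonal (fun i : Fin n => (a i.succ) ^ 2)
          - (((n + 1 : ℕ) : ℝ))⁻¹ •
            Matrix.vecMulVec (fun i => (a i.succ) ^ 2) (fun i => (a i.succ) ^ 2)))
      0 0
      (Matrix.fromBlocks
        ((∫ t in (0 : ℝ)..(2 * Real.pi), (f t) ^ 2) •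
          ((1 : Matrix (Fin n) (Fin n) ℝ)
            + ((a 0) ^ 2)⁻¹ • Matrix.vecMulVec (fun i => a i.succ) (fun i => a i.succ)))
        0 0 (1 : Matrix (Fin (n + 1)) (Fin (n + 1)) ℝ)))
    (hHinv : Hinv = Matrix.fromBlocks
      ((∫ t in (0 : ℝ)..(2 * Real.pi), (f' t) ^ 2)⁻¹ •
        (Matrix.diagonal (fun i : Fin n => ((a i.succ) ^ 2)⁻¹)
          + ((a 0) ^ 2)⁻¹ • Matrix.vecMulVec (fun _ => (1 : ℝ)) (fun _ => (1 : ℝ))))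
      0 0
      (Matrix.fromBlocks
        ((∫ t in (0 : ℝ)..(2 * Real.pi), (f t) ^ 2)⁻¹ •
          ((1 : Matrix (Fin n) (Fin n) ℝ)
            - (((n + 1 : ℕ) : ℝ))⁻¹ • Matrix.vecMulVec (fun i => a i.succ) (fun i => a i.succ)))
        0 0 (1 : Matrix (Fin (n + 1)) (Fin (n + 1)) ℝ))) :
    H.PosDef ∧ Hᵀ = H ∧ H * Hinv = 1 ∧ Hinv * H = 1 :=
  efficient_information_matrix_general n a ha hsum f f' hderiv hf' hper hnonconst H Hinv hH hHinv
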